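/- For all a, b > 0, one has the integral representation β₁(a,b) = (1/4) ∫_a^b (a·b/z)·(1/Λ(z,a) - 1/Λ(z,b)) dz. -/

import Mathlib

open Real

/-- The logarithmic mean `Λ(s,t)`. -/
noncomputable def logMean (s t : ℝ) : ℝ :=
  if s = t then s else (s - t) / (Real.log s - Real.log t)

/-- The harmonic-logarithmic mean `Λ_H(s,t) = st/Λ(s,t)`. -/
noncomputable def harmLogMean (s t : ℝ) : ℝ := s * t / logMean s t

/-- `α*₁(a,b,ξ) = ∫₀^ξ sinh(x) Λ_H(a e^{-x}, b e^{x}) dx`. -/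
noncomputable def alphaOne (a b ξ : ℝ) : ℝ :=
  ∫ x in (0:ℝ)..ξ, Real.sinh x * harmLogMean (a * Real.exp (-x)) (b * Real.exp x)

/-- `β₁(a,b) = α*₁(a, b, (1/2) log(a/b))`. -/
noncomputable def betaOne (a b : ℝ) : ℝ :=
  alphaOne a b ((1 / 2) * Real.log (a / b))

/-!
Substituting `z = b e^{2x}` and using the homogeneity `Λ(λs, λt) = λΛ(s, t)` turns
`β₁(a, b)` into `(1/4) ∫_a^b (ab/z - a) / Λ(z, a) dz`. The inversion `z ↦ ab/z`, under which
`Λ(ab/z, b) = (b/z) Λ(z, a)`, maps `[a, b]` to itself and carries `ab / (z Λ(z, b)) dz` to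
`a / Λ(z, a) dz`; replacing the latter by the former gives the claimed integrand.
-/

open Set intervalIntegral

theorem logMean_comm (s t : ℝ) : logMean s t = logMean t s := by
  unfold logMean
  rcases eq_or_ne s t with rfl | h
  · rfl
  · rw [if_neg h, if_neg h.symm, ← neg_sub t, ← neg_sub (log t), neg_div_neg_eq]

theorem logMean_pos {s t : ℝ} (hs : 0 < s) (ht : 0 < t) : 0 < logMean s t := by
  unfold logMean
  split_ifs with h
  · exact hs
  · rcases lt_or_gt_of_ne h with h | h
    · exact div_pos_of_neg_of_neg (by linarith) (by linarith [log_lt_log hs h])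
    · exact div_pos (by linarith) (by linarith [log_lt_log ht h])

theorem logMean_mul_mul {c s t : ℝ} (hc : 0 < c) (hs : 0 < s) (ht : 0 < t) :
    logMean (c * s) (c * t) = c * logMean s t := by
  unfold logMean
  rcases eq_or_ne s t with rfl | h
  · simp
  · rw [if_neg h, if_neg (by simpa [hc.ne'] using h), log_mul hc.ne' hs.ne',
      log_mul hc.ne' ht.ne', add_sub_add_left_eq_sub, ← mul_sub, mul_div_assoc]

theorem logMean_mul_div_left {a b w : ℝ} (ha : 0 < a) (hb : 0 < b) (hw : 0 < w) :
    logMean (a * b / w) b = b / w * logMean w a := by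
  calc logMean (a * b / w) b = logMean (b / w * a) (b / w * w) := by
        congr 1 <;> field_simp
    _ = b / w * logMean w a := by rw [logMean_mul_mul (div_pos hb hw) ha hw, logMean_comm]

theorem inv_logMean_eq_dslope (z c : ℝ) : (logMean z c)⁻¹ = dslope log c z := by
  rcases eq_or_ne z c with rfl | h
  · rw [dslope_same, deriv_log, logMean, if_pos rfl]
  · rw [dslope_of_ne _ h, slope_def_field, logMean, if_neg h, inv_div]

theorem continuousOn_inv_logMean {c : ℝ} (hc : 0 < c) :
    ContinuousOn (fun z => (logMean z c)⁻¹) (Ioi 0) := by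
  simp only [inv_logMean_eq_dslope]
  exact (continuousOn_dslope (Ioi_mem_nhds hc)).2
    ⟨continuousOn_log.mono fun z hz => ne_of_gt hz, differentiableAt_log hc.ne'⟩

theorem continuousOn_div_logMean {c : ℝ} (hc : 0 < c) {g : ℝ → ℝ}
    (hg : ContinuousOn g (Ioi 0)) :
    ContinuousOn (fun z => g z / logMean z c) (Ioi 0) := by
  simp only [div_eq_mul_inv]
  exact hg.mul (continuousOn_inv_logMean hc)

theorem intervalIntegrable_div_logMean {a b c : ℝ} (ha : 0 < a) (hb : 0 < b) (hc : 0 < c)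
    {g : ℝ → ℝ} (hg : ContinuousOn g (Ioi 0)) :
    IntervalIntegrable (fun z => g z / logMean z c) MeasureTheory.volume a b :=
  ((continuousOn_div_logMean hc hg).mono fun _ hz =>
    (lt_min ha hb).trans_le hz.1).intervalIntegrable

theorem intervalIntegral.integral_comp_mul_exp {f : ℝ → ℝ} {c : ℝ} (hc : 0 < c)
    (hf : ContinuousOn f (Ioi 0)) (α β : ℝ) :
    ∫ x in α..β, f (c * exp x) * (c * exp x) = ∫ z in c * exp α..c * exp β, f z :=
  integral_comp_mul_deriv' (f := fun x => c * exp x) (fun x _ => (hasDerivAt_exp x).const_mul c)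
    (by fun_prop) (hf.mono <| by rintro _ ⟨x, -, rfl⟩; exact mul_pos hc (exp_pos x))

theorem intervalIntegral.integral_comp_div_mul_div_sq {f : ℝ → ℝ} {k α β : ℝ} (hk : 0 < k)
    (hα : 0 < α) (hβ : 0 < β) (hf : ContinuousOn f (Ioi 0)) :
    ∫ x in α..β, f (k / x) * (k / x ^ 2) = ∫ z in k / β..k / α, f z := by
  have hpos : ∀ x ∈ uIcc α β, 0 < x := fun x hx => (lt_min hα hβ).trans_le hx.1
  have hderiv : ∀ x ∈ uIcc α β, HasDerivAt (fun x => k / x) (-(k / x ^ 2)) x := fun x hx => by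
    simpa only [div_eq_mul_inv, mul_neg] using (hasDerivAt_inv (hpos x hx).ne').const_mul k
  have h := integral_comp_mul_deriv' hderiv ?_ (hf.mono ?_)
  · simp only [Function.comp_def, mul_neg, integral_neg] at h
    rw [integral_symm (k / α), ← h, neg_neg]
  · exact ContinuousOn.neg (continuousOn_const.div (continuousOn_pow 2) fun x hx => by
      have := hpos x hx; positivity)
  · rintro _ ⟨x, hx, rfl⟩
    exact div_pos hk (hpos x hx)

theorem sinh_mul_harmLogMean {a b : ℝ} (ha : 0 < a) (hb : 0 < b) (x : ℝ) :
    sinh x * harmLogMean (a * exp (-x)) (b * exp x) =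
      a * b * (exp (2 * x) - 1) / (2 * logMean (b * exp (2 * x)) a) := by
  have hΛ : logMean (a * exp (-x)) (b * exp x) = exp (-x) * logMean (b * exp (2 * x)) a := by
    rw [logMean_comm _ a, ← logMean_mul_mul (exp_pos _) ha (by positivity)]
    congr 1
    · ring
    · rw [mul_left_comm, ← exp_add]
      ring_nf
  have hpos := logMean_pos (mul_pos hb (exp_pos (2 * x))) ha
  rw [harmLogMean, hΛ, sinh_eq, exp_neg, show 2 * x = x + x by ring, exp_add]
  field_simp

theorem betaOne_eq_integral {a b : ℝ} (ha : 0 < a) (hb : 0 < b) :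
    betaOne a b = (1 / 4) * ∫ z in a..b, (a * b / z - a) / logMean z a := by
  set G : ℝ → ℝ := fun z => (a * b / z - a) / logMean z a with hG_def
  have hG : ContinuousOn G (Ioi 0) := continuousOn_div_logMean ha <|
    (continuousOn_const.div continuousOn_id fun z hz => hz.ne').sub continuousOn_const
  have hpt (x : ℝ) : sinh x * harmLogMean (a * exp (-x)) (b * exp x) =
      -(1 / 2) * (G (b * exp (2 * x)) * (b * exp (2 * x))) := by
    have := logMean_pos (mul_pos hb (exp_pos (2 * x))) ha
    rw [sinh_mul_harmLogMean ha hb, hG_def]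
    field_simp
    ring
  have hend : b * exp (2 * (1 / 2 * log (a / b))) = a := by
    rw [← mul_assoc, mul_one_div_cancel two_ne_zero, one_mul, exp_log (div_pos ha hb)]
    field_simp
  unfold betaOne alphaOne
  simp only [hpt, integral_const_mul]
  rw [integral_comp_mul_left (fun u => G (b * exp u) * (b * exp u)) two_ne_zero,
    integral_comp_mul_exp hb hG, mul_zero, exp_zero, mul_one, hend,
    integral_symm, smul_eq_mul]
  ring

theorem integral_mul_div_div_logMean {a b : ℝ} (ha : 0 < a) (hb : 0 < b) :
    ∫ z in a..b, a * b / z / logMean z b = ∫ z in a..b, a / logMean z a := by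
  have hab := mul_pos ha hb
  have h := integral_comp_div_mul_div_sq hab ha hb
    (continuousOn_div_logMean hb (g := fun z => a * b / z)
      (continuousOn_const.div continuousOn_id fun z hz => hz.ne'))
  rw [mul_div_cancel_right₀ _ hb.ne', mul_div_cancel_left₀ _ ha.ne'] at h
  rw [← h]
  refine integral_congr fun w hw => ?_
  have hw : 0 < w := (lt_min ha hb).trans_le hw.1
  have hΛ := logMean_pos hw ha
  rw [logMean_mul_div_left ha hb hw]
  field_simp

/-- `β₁(a,b) = (1/4) ∫_a^b (ab/z)(1/Λ(z,a) - 1/Λ(z,b)) dz`. -/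
theorem betaOne_integral_repr (a b : ℝ) (ha : 0 < a) (hb : 0 < b) :
    betaOne a b =
      (1 / 4) * ∫ z in a..b, a * b / z * (1 / logMean z a - 1 / logMean z b) := by
  have hcont : ContinuousOn (fun z => a * b / z) (Ioi 0) :=
    continuousOn_const.div continuousOn_id fun z hz => hz.ne'
  calc betaOne a b = (1 / 4) * ∫ z in a..b, (a * b / z - a) / logMean z a :=
        betaOne_eq_integral ha hb
    _ = (1 / 4) * ((∫ z in a..b, a * b / z / logMean z a) -
          ∫ z in a..b, a / logMean z a) := by
        rw [← integral_sub (intervalIntegrable_div_logMean ha hb ha hcont)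
          (intervalIntegrable_div_logMean ha hb ha continuousOn_const)]
        simp only [sub_div]
    _ = (1 / 4) * ((∫ z in a..b, a * b / z / logMean z a) -
          ∫ z in a..b, a * b / z / logMean z b) := by
        rw [integral_mul_div_div_logMean ha hb]
    _ = (1 / 4) * ∫ z in a..b, a * b / z * (1 / logMean z a - 1 / logMean z b) := by
        rw [← integral_sub (intervalIntegrable_div_logMean ha hb ha hcont)
          (intervalIntegrable_div_logMean ha hb hb hcont)]
        simp only [mul_sub, mul_one_div]
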